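/- Let E be a Banach space, let L and P be continuous linear operators on E with P a projection (P∘P = P), and set Q = I − P. Then for every v ∈ E and every t ∈ ℝ, the Mori–Zwanzig identity holds: the function t ↦ exp(tL) v is differentiable and d/dt [exp(tL) v] = exp(tL) (P L v) + ∫_0^t exp((t−s)L) P L exp(sQL) (Q L v) ds + exp(tQL) (Q L v). In other words, the time derivative of the evolved observable splits exactly into a Markovian term, a memory term, and a noise term. -/

import Mathlib

/-!
Differentiating `s ↦ exp ((t - s) • A) * exp (s • B)` gives `-exp ((t - s) • A) * (A - B) * exp (s • B)`,
so the fundamental theorem of calculus on `[0, t]` yields Duhamel's formula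
`exp (t • A) = exp (t • B) + ∫₀ᵗ exp ((t - s) • A) * (A - B) * exp (s • B) ds`.
With `A = L`, `B = QL` we have `A - B = PL`; applying the formula to `QLv` and splitting
`Lv = PLv + QLv` in `d/dt exp (tL) v = exp (tL) (Lv)` gives the three terms.
-/

open MeasureTheory NormedSpace

section Duhamel

variable {𝔸 : Type*} [NormedRing 𝔸] [NormedAlgebra ℝ 𝔸] [CompleteSpace 𝔸]

theorem hasDerivAt_exp_smul_sub_mul_exp_smul (A B : 𝔸) (t s : ℝ) :
    HasDerivAt (fun u : ℝ => exp ((t - u) • A) * exp (u • B))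
      (-(exp ((t - s) • A) * (A - B) * exp (s • B))) s := by
  have hA : HasDerivAt (fun u : ℝ => exp ((t - u) • A)) (-(exp ((t - s) • A) * A)) s := by
    simpa [Function.comp_def] using
      (hasDerivAt_exp_smul_const A (t - s)).scomp s ((hasDerivAt_id s).const_sub t)
  exact (hA.mul (hasDerivAt_exp_smul_const' B s)).congr_deriv (by noncomm_ring)

theorem continuous_exp_smul_sub_mul_mul_exp_smul (A B C : 𝔸) (t : ℝ) :
    Continuous fun s : ℝ => exp ((t - s) • A) * C * exp (s • B) := by
  have hexp (X : 𝔸) : Continuous fun u : ℝ => exp (u • X) :=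
    (differentiable_exp_smul_const ℝ X).continuous
  exact (((hexp A).comp (continuous_sub_left t)).mul continuous_const).mul (hexp B)

theorem exp_smul_eq_exp_smul_add_integral (A B : 𝔸) (t : ℝ) :
    exp (t • A) = exp (t • B) + ∫ s in (0 : ℝ)..t, exp ((t - s) • A) * (A - B) * exp (s • B) := by
  have hftc := intervalIntegral.integral_eq_sub_of_hasDerivAt
    (fun s _ => hasDerivAt_exp_smul_sub_mul_exp_smul A B t s)
    ((continuous_exp_smul_sub_mul_mul_exp_smul A B (A - B) t).neg.intervalIntegrable 0 t)
  rw [intervalIntegral.integral_neg] at hftc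
  simp only [sub_self, zero_smul, exp_zero, sub_zero, one_mul, mul_one] at hftc
  rw [← neg_neg (∫ s in (0 : ℝ)..t, _), hftc]
  abel

end Duhamel

theorem mori_zwanzig_identity_general
    {E : Type*} [NormedAddCommGroup E] [NormedSpace ℝ E] [CompleteSpace E]
    (L P : E →L[ℝ] E) (Q : E →L[ℝ] E) (hQ : Q = 1 - P)
    (v : E) (t : ℝ) :
    HasDerivAt (fun τ : ℝ => NormedSpace.exp (τ • L) v)
      (NormedSpace.exp (t • L) (P (L v))
        + (∫ s in (0:ℝ)..t,
            NormedSpace.exp ((t - s) • L)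
              (P (L (NormedSpace.exp (s • (Q * L)) (Q (L v))))))
        + NormedSpace.exp (t • (Q * L)) (Q (L v))) t := by
  have hevolve : HasDerivAt (fun τ : ℝ => exp (τ • L) v) (exp (t • L) (L v)) t := by
    simpa using (hasDerivAt_exp_smul_const L t).clm_apply (hasDerivAt_const t v)
  have hLQL : L - Q * L = P * L := by rw [hQ]; noncomm_ring
  have hduhamel := congrArg (fun T : E →L[ℝ] E => T (Q (L v)))
    (exp_smul_eq_exp_smul_add_integral L (Q * L) t)
  simp only [add_apply, hLQL] at hduhamel
  rw [ContinuousLinearMap.intervalIntegral_apply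
    ((continuous_exp_smul_sub_mul_mul_exp_smul L (Q * L) (P * L) t).intervalIntegrable 0 t)]
    at hduhamel
  convert hevolve using 1
  have hsplit : L v = P (L v) + Q (L v) := by simp [hQ]
  conv_rhs => rw [hsplit, map_add, hduhamel]
  simp only [mul_apply_eq_comp]
  abel

/-- **The Mori–Zwanzig identity.**
For continuous linear operators `L, P` on a Banach space with `P` a projection and `Q = I - P`,
and for every `v`, the time derivative of the evolved observable `exp (tL) v` splits exactly
into a Markovian term `exp (tL) (PLv)`, a memory term
`∫₀ᵗ exp ((t-s)L) P L exp (sQL) (QLv) ds`, and a noise term `exp (tQL) (QLv)`. -/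
theorem mori_zwanzig_identity
    {E : Type*} [NormedAddCommGroup E] [NormedSpace ℝ E] [CompleteSpace E]
    (L P : E →L[ℝ] E) (hP : P * P = P) (Q : E →L[ℝ] E) (hQ : Q = 1 - P)
    (v : E) (t : ℝ) :
    HasDerivAt (fun τ : ℝ => NormedSpace.exp (τ • L) v)
      (NormedSpace.exp (t • L) (P (L v))
        + (∫ s in (0:ℝ)..t,
            NormedSpace.exp ((t - s) • L)
              (P (L (NormedSpace.exp (s • (Q * L)) (Q (L v))))))
        + NormedSpace.exp (t • (Q * L)) (Q (L v))) t :=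
  mori_zwanzig_identity_general L P Q hQ v t
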